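/- arXiv:2404.13583 — 3 statements merged into one kernel-verified Lean document; each statement's English description precedes it below -/
import Mathlib

section
/- (Theorem 1) If the translational dynamics satisfy ξ''(t) = U(t) + D̂(t) with control U = U_eq + U_sw, where U_eq = v' − γ(ξ' − ᵈξ') − D̂ and U_sw = −(c₁·sg(s) + c₂·s) (sg applied componentwise), then the Lyapunov function ²V(t) = (1/2)‖s(t)‖² has derivative ²V'(t) = −c₁·⟨s(t), sg(s(t))⟩ − c₂·‖s(t)‖², and ²V'(t) ≤ 0 for all t; hence the position control system is Lyapunov stable. -/
open scoped InnerProductSpace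

/-- The saturated sign function with parameter `ε`. -/
noncomputable def sg (ε x : ℝ) : ℝ :=
  if x > ε then 1 else if x < -ε then -1 else x / ε

/-- `sg` applied componentwise to a vector in `ℝ³`. -/
noncomputable def sgVec (ε : ℝ) (v : EuclideanSpace ℝ (Fin 3)) :
    EuclideanSpace ℝ (Fin 3) :=
  WithLp.toLp 2 (fun i => sg ε (v i))

/-!
The control law is chosen so that the equivalent part `U_eq` cancels every term of `s'` except
the switching part, so that `s' = U_sw = -(c₁ • sg s + c₂ • s)`. The derivative of `‖s‖² / 2` is
then `⟪s, s'⟫ = -c₁ ⟪s, sg s⟫ - c₂ ‖s‖²`, which is nonpositive because `sg` has the sign of its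
argument in every coordinate.
-/

lemma mul_sg_self_nonneg {ε : ℝ} (hε : 0 ≤ ε) (x : ℝ) : 0 ≤ x * sg ε x := by
  unfold sg
  split_ifs
  · linarith
  · linarith
  · rw [← mul_div_assoc]
    exact div_nonneg (mul_self_nonneg x) hε

lemma inner_sgVec_self_nonneg {ε : ℝ} (hε : 0 ≤ ε) (x : EuclideanSpace ℝ (Fin 3)) :
    0 ≤ ⟪x, sgVec ε x⟫_ℝ := by
  rw [PiLp.inner_apply]
  refine Finset.sum_nonneg fun i _ => ?_
  simpa [sgVec, mul_comm] using mul_sg_self_nonneg hε (x i)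

theorem hasDerivAt_slidingSurface {E : Type*} [NormedAddCommGroup E] [NormedSpace ℝ E]
    {ξ dξ e v s : ℝ → E} {lam γ t : ℝ} {w : E}
    (hξ : DifferentiableAt ℝ ξ t) (hξ' : DifferentiableAt ℝ (deriv ξ) t)
    (hdξ : DifferentiableAt ℝ dξ t) (hdξ' : DifferentiableAt ℝ (deriv dξ) t)
    (he : e = fun r => ξ r - dξ r) (hv : v = fun r => deriv dξ r - lam • e r)
    (hs : s = fun r => γ • e r + (deriv ξ r - v r))
    (hacc : deriv (deriv ξ) t = deriv v t - γ • (deriv ξ t - deriv dξ t) + w) :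
    HasDerivAt s w t := by
  subst he hv hs
  have he' : HasDerivAt (fun r => ξ r - dξ r) (deriv ξ t - deriv dξ t) t :=
    hξ.hasDerivAt.sub hdξ.hasDerivAt
  have hv' : HasDerivAt (fun r => deriv dξ r - lam • (ξ r - dξ r))
      (deriv (deriv dξ) t - lam • (deriv ξ t - deriv dξ t)) t :=
    hdξ'.hasDerivAt.sub (he'.const_smul lam)
  refine ((he'.const_smul γ).add (hξ'.hasDerivAt.sub hv')).congr_deriv ?_
  rw [hacc, hv'.deriv]
  abel

lemma inner_neg_smul_add_smul_self {F : Type*} [NormedAddCommGroup F] [InnerProductSpace ℝ F]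
    (c₁ c₂ : ℝ) (x y : F) :
    ⟪x, -(c₁ • y + c₂ • x)⟫_ℝ = -(c₁ * ⟪x, y⟫_ℝ) - c₂ * ‖x‖ ^ 2 := by
  rw [inner_neg_right, inner_add_right, real_inner_smul_right, real_inner_smul_right,
    real_inner_self_eq_norm_sq]
  ring

theorem position_controller_stable_general
    (ε lam γ c₁ c₂ : ℝ) (hε0 : 0 < ε)
    (hc₁ : 0 < c₁) (hc₂ : 0 < c₂)
    (ξ dξ Dhat U : ℝ → EuclideanSpace ℝ (Fin 3))
    (hξ : Differentiable ℝ ξ) (hξ' : Differentiable ℝ (deriv ξ))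
    (hdξ : Differentiable ℝ dξ) (hdξ' : Differentiable ℝ (deriv dξ))
    (e v s : ℝ → EuclideanSpace ℝ (Fin 3))
    (he : e = fun t => ξ t - dξ t)
    (hv : v = fun t => deriv dξ t - lam • e t)
    (hs : s = fun t => γ • e t + (deriv ξ t - v t))
    (hU : ∀ t, U t = (deriv v t - γ • (deriv ξ t - deriv dξ t) - Dhat t)
        + (-(c₁ • sgVec ε (s t) + c₂ • s t)))
    (hdyn : ∀ t, deriv (deriv ξ) t = U t + Dhat t) :
    ∀ t, HasDerivAt (fun r => (1 / 2 : ℝ) * ‖s r‖ ^ 2)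
        (-(c₁ * ⟪s t, sgVec ε (s t)⟫_ℝ) - c₂ * ‖s t‖ ^ 2) t ∧
      -(c₁ * ⟪s t, sgVec ε (s t)⟫_ℝ) - c₂ * ‖s t‖ ^ 2 ≤ 0 := by
  intro t
  have hs' : HasDerivAt s (-(c₁ • sgVec ε (s t) + c₂ • s t)) t :=
    hasDerivAt_slidingSurface (hξ t) (hξ' t) (hdξ t) (hdξ' t) he hv hs
      (by rw [hdyn, hU]; abel)
  refine ⟨(hs'.norm_sq.const_mul (1 / 2)).congr_deriv ?_, ?_⟩
  · rw [inner_neg_smul_add_smul_self]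
    ring
  · linarith [mul_nonneg hc₁.le (inner_sgVec_self_nonneg hε0.le (s t)),
      mul_nonneg hc₂.le (sq_nonneg ‖s t‖)]

/-- Theorem 1: under the control law `U = U_eq + U_sw`, the Lyapunov function
`²V = (1/2)‖s‖²` has derivative `−c₁⟨s, sg(s)⟩ − c₂‖s‖² ≤ 0`; the position
control system is Lyapunov stable. -/
theorem position_controller_stable
    (ε lam γ c₁ c₂ : ℝ) (hε0 : 0 < ε) (hε1 : ε < 1)
    (hlam : 0 < lam) (hγ : 0 < γ) (hc₁ : 0 < c₁) (hc₂ : 0 < c₂)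
    (ξ dξ Dhat U : ℝ → EuclideanSpace ℝ (Fin 3))
    (hξ : Differentiable ℝ ξ) (hξ' : Differentiable ℝ (deriv ξ))
    (hdξ : Differentiable ℝ dξ) (hdξ' : Differentiable ℝ (deriv dξ))
    (hDhat : Differentiable ℝ Dhat)
    (e v s : ℝ → EuclideanSpace ℝ (Fin 3))
    (he : e = fun t => ξ t - dξ t)
    (hv : v = fun t => deriv dξ t - lam • e t)
    (hs : s = fun t => γ • e t + (deriv ξ t - v t))
    (hU : ∀ t, U t = (deriv v t - γ • (deriv ξ t - deriv dξ t) - Dhat t)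
        + (-(c₁ • sgVec ε (s t) + c₂ • s t)))
    (hdyn : ∀ t, deriv (deriv ξ) t = U t + Dhat t) :
    ∀ t, HasDerivAt (fun r => (1 / 2 : ℝ) * ‖s r‖ ^ 2)
        (-(c₁ * ⟪s t, sgVec ε (s t)⟫_ℝ) - c₂ * ‖s t‖ ^ 2) t ∧
      -(c₁ * ⟪s t, sgVec ε (s t)⟫_ℝ) - c₂ * ‖s t‖ ^ 2 ≤ 0 :=
  position_controller_stable_general ε lam γ c₁ c₂ hε0 hc₁ hc₂ ξ dξ Dhat U hξ hξ' hdξ hdξ' e v s he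
    hv hs hU hdyn
end

section
/- Suppose the sliding variable satisfies s'(t) = −c₁·sg(s(t)) − c₂·s(t) + (D(t) − D̂(t)), where the true disturbance is D(t) = Wᵀ·H(t) + σ(t), the estimated disturbance is D̂(t) = Ŵ(t)ᵀ·H(t), and the weight matrix evolves according to the update rule Ŵ'(t) = a·(H(t)·s(t)ᵀ − η‖s(t)‖·Ŵ(t)). Then the Lyapunov function V(t) = (1/2)‖s(t)‖² + (1/(2a))‖W − Ŵ(t)‖² has derivative V'(t) = −c₁·⟨s(t), sg(s(t))⟩ − c₂·‖s(t)‖² + ⟨s(t), σ(t)⟩ + η‖s(t)‖·tr(W̃(t)ᵀ(W − W̃(t))), where W̃(t) = W − Ŵ(t). -/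
open Matrix
open scoped InnerProductSpace

/-- Reinterpret a plain vector `Fin 3 → ℝ` as an element of `ℝ³`. -/
def toE3 (v : Fin 3 → ℝ) : EuclideanSpace ℝ (Fin 3) := WithLp.toLp 2 v

/-- The Frobenius norm of an `m × 3` real matrix: `‖A‖ = √(tr(AᵀA))`. -/
noncomputable def frob {m : ℕ} (A : Matrix (Fin m) (Fin 3) ℝ) : ℝ :=
  Real.sqrt (Matrix.trace (Aᵀ * A))

/-!
Differentiating `V`, the sliding-variable part contributes `⟪s, s'⟫` and the weight part
`-(1/a) tr(W̃ᵀ Ŵ')`. The disturbance mismatch `D - D̂ = W̃ᵀ H + σ` enters `⟪s, s'⟫` as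
`⟪s, W̃ᵀ H⟫ = tr(W̃ᵀ H sᵀ)`, which is exactly cancelled by the `H sᵀ` term of the update rule,
leaving the leakage term `η ‖s‖ tr(W̃ᵀ Ŵ)`.
-/

section TraceDeriv

variable {𝕜 : Type*} [NontriviallyNormedField 𝕜] {m n : Type*} [Fintype m] [Fintype n]

theorem Matrix.hasDerivAt_trace_transpose_mul {A B : 𝕜 → Matrix m n 𝕜} {A' B' : Matrix m n 𝕜}
    {t : 𝕜} (hA : ∀ i j, HasDerivAt (fun r => A r i j) (A' i j) t)
    (hB : ∀ i j, HasDerivAt (fun r => B r i j) (B' i j) t) :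
    HasDerivAt (fun r => trace ((A r)ᵀ * B r)) (trace (A'ᵀ * B t) + trace ((A t)ᵀ * B')) t := by
  simp only [trace, diag, mul_apply, transpose_apply, ← Finset.sum_add_distrib]
  exact HasDerivAt.fun_sum fun j _ => HasDerivAt.fun_sum fun i _ => (hA i j).mul (hB i j)

theorem Matrix.hasDerivAt_trace_transpose_mul_self {A : 𝕜 → Matrix m n 𝕜} {A' : Matrix m n 𝕜}
    {t : 𝕜} (hA : ∀ i j, HasDerivAt (fun r => A r i j) (A' i j) t) :
    HasDerivAt (fun r => trace ((A r)ᵀ * A r)) (2 * trace ((A t)ᵀ * A')) t := by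
  convert hasDerivAt_trace_transpose_mul hA hA using 1
  rw [← trace_transpose (A'ᵀ * A t), transpose_mul, transpose_transpose, two_mul]

end TraceDeriv

theorem frob_sq {m : ℕ} (A : Matrix (Fin m) (Fin 3) ℝ) : frob A ^ 2 = trace (Aᵀ * A) :=
  Real.sq_sqrt <| by
    simpa [conjTranspose_eq_transpose_of_trivial] using
      (posSemidef_conjTranspose_mul_self A).trace_nonneg

theorem EuclideanSpace.inner_toLp_transpose_mulVec {m n : Type*} [Fintype m] [Fintype n]
    (x : EuclideanSpace ℝ n) (A : Matrix m n ℝ) (h : m → ℝ) :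
    ⟪x, WithLp.toLp 2 (Aᵀ *ᵥ h)⟫_ℝ = trace (Aᵀ * vecMulVec h x) := by
  simp only [EuclideanSpace.inner_eq_star_dotProduct, star_trivial, trace, diag, mul_apply,
    vecMulVec_apply, transpose_apply, dotProduct, mulVec, Finset.sum_mul]
  exact Finset.sum_congr rfl fun _ _ => Finset.sum_congr rfl fun _ _ => by ring

theorem hasDerivAt_lyapunov {m : ℕ} (a : ℝ) (W : Matrix (Fin m) (Fin 3) ℝ)
    {s : ℝ → EuclideanSpace ℝ (Fin 3)} {What : ℝ → Matrix (Fin m) (Fin 3) ℝ}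
    {s' : EuclideanSpace ℝ (Fin 3)} {What' : Matrix (Fin m) (Fin 3) ℝ} {t : ℝ}
    (hs : HasDerivAt s s' t) (hWhat : ∀ i j, HasDerivAt (fun r => What r i j) (What' i j) t) :
    HasDerivAt (fun r => (1 / 2 : ℝ) * ‖s r‖ ^ 2 + (1 / (2 * a)) * frob (W - What r) ^ 2)
      (⟪s t, s'⟫_ℝ - a⁻¹ * trace ((W - What t)ᵀ * What')) t := by
  have hWtilde : ∀ i j, HasDerivAt (fun r => (W - What r) i j) ((-What') i j) t :=
    fun i j => (hWhat i j).const_sub (W i j)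
  simp only [frob_sq]
  refine ((hs.norm_sq.const_mul _).add
    ((hasDerivAt_trace_transpose_mul_self hWtilde).const_mul _)).congr_deriv ?_
  rw [Matrix.mul_neg, trace_neg]
  ring

theorem rbfnn_lyapunov_derivative_general {m : ℕ}
    (ε c₁ c₂ η a : ℝ)
    (ha : 0 < a)
    (s : ℝ → EuclideanSpace ℝ (Fin 3)) (hs : Differentiable ℝ s)
    (H : ℝ → EuclideanSpace ℝ (Fin m))
    (σ : ℝ → EuclideanSpace ℝ (Fin 3))
    (W : Matrix (Fin m) (Fin 3) ℝ)
    (What : ℝ → Matrix (Fin m) (Fin 3) ℝ)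
    (D Dhat : ℝ → EuclideanSpace ℝ (Fin 3))
    (hD : ∀ t, D t = toE3 (Wᵀ.mulVec (H t)) + σ t)
    (hDhat : ∀ t, Dhat t = toE3 ((What t)ᵀ.mulVec (H t)))
    (hWhat : ∀ t i j, HasDerivAt (fun r => What r i j)
        (a * (Matrix.vecMulVec (H t) (s t) i j - η * ‖s t‖ * What t i j)) t)
    (hsd : ∀ t, deriv s t = -(c₁ • sgVec ε (s t)) - c₂ • s t + (D t - Dhat t)) :
    ∀ t, HasDerivAt
        (fun r => (1 / 2 : ℝ) * ‖s r‖ ^ 2 + (1 / (2 * a)) * frob (W - What r) ^ 2)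
        (-(c₁ * ⟪s t, sgVec ε (s t)⟫_ℝ) - c₂ * ‖s t‖ ^ 2 + ⟪s t, σ t⟫_ℝ
          + η * ‖s t‖ * Matrix.trace ((W - What t)ᵀ * (W - (W - What t)))) t := by
  intro t
  have hupdate : ∀ i j, HasDerivAt (fun r => What r i j)
      ((a • (vecMulVec (H t) (s t) - (η * ‖s t‖) • What t)) i j) t :=
    hWhat t
  have hmismatch : D t - Dhat t = toE3 ((W - What t)ᵀ *ᵥ H t) + σ t := by
    rw [hD, hDhat, transpose_sub, sub_mulVec, toE3, toE3, toE3, WithLp.toLp_sub]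
    abel
  refine (hasDerivAt_lyapunov a W (hs t).hasDerivAt hupdate).congr_deriv ?_
  rw [hsd t, hmismatch, toE3, sub_sub_cancel]
  simp only [inner_add_right, inner_sub_right, inner_neg_right, inner_smul_right,
    real_inner_self_eq_norm_sq, EuclideanSpace.inner_toLp_transpose_mulVec, Matrix.mul_smul,
    Matrix.mul_sub, trace_smul, trace_sub, smul_eq_mul]
  field_simp
  ring

/-- With the RBFNN disturbance estimator and its weight update rule, the
Lyapunov function `V = (1/2)‖s‖² + (1/(2a))‖W − Ŵ‖²` has derivative
`V' = −c₁⟨s, sg(s)⟩ − c₂‖s‖² + ⟨s, σ⟩ + η‖s‖ tr(W̃ᵀ(W − W̃))`. -/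
theorem rbfnn_lyapunov_derivative {m : ℕ}
    (ε c₁ c₂ η a : ℝ) (hε0 : 0 < ε) (hε1 : ε < 1)
    (hc₁ : 0 < c₁) (hc₂ : 0 < c₂) (hη : 0 < η) (ha : 0 < a)
    (s : ℝ → EuclideanSpace ℝ (Fin 3)) (hs : Differentiable ℝ s)
    (H : ℝ → EuclideanSpace ℝ (Fin m)) (hH : Continuous H)
    (σ : ℝ → EuclideanSpace ℝ (Fin 3)) (hσ : Continuous σ)
    (W : Matrix (Fin m) (Fin 3) ℝ)
    (What : ℝ → Matrix (Fin m) (Fin 3) ℝ)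
    (D Dhat : ℝ → EuclideanSpace ℝ (Fin 3))
    (hD : ∀ t, D t = toE3 (Wᵀ.mulVec (H t)) + σ t)
    (hDhat : ∀ t, Dhat t = toE3 ((What t)ᵀ.mulVec (H t)))
    (hWhat : ∀ t i j, HasDerivAt (fun r => What r i j)
        (a * (Matrix.vecMulVec (H t) (s t) i j - η * ‖s t‖ * What t i j)) t)
    (hsd : ∀ t, deriv s t = -(c₁ • sgVec ε (s t)) - c₂ • s t + (D t - Dhat t)) :
    ∀ t, HasDerivAt
        (fun r => (1 / 2 : ℝ) * ‖s r‖ ^ 2 + (1 / (2 * a)) * frob (W - What r) ^ 2)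
        (-(c₁ * ⟪s t, sgVec ε (s t)⟫_ℝ) - c₂ * ‖s t‖ ^ 2 + ⟪s t, σ t⟫_ℝ
          + η * ‖s t‖ * Matrix.trace ((W - What t)ᵀ * (W - (W - What t)))) t :=
  rbfnn_lyapunov_derivative_general ε c₁ c₂ η a ha s hs H σ W What D Dhat hD hDhat hWhat hsd
end

section
/- (Converter consistency) Let u_x, u_y, u_z, ψ, g be real numbers with u_z + g > 0. Define θ = arctan((u_x·cos ψ + u_y·sin ψ)/(u_z + g)), φ = arctan(cos θ·(u_x·sin ψ − u_y·cos ψ)/(u_z + g)), and f_t = (u_z + g)/(cos φ·cos θ). Then (cos φ·sin θ·cos ψ + sin φ·sin ψ)·f_t = u_x, (cos φ·sin θ·sin ψ − sin φ·cos ψ)·f_t = u_y, and cos φ·cos θ·f_t − g = u_z. -/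
/-!
Writing `f_t = (u_z + g) / (cos φ cos θ)`, the definitions of `θ` and `φ` through their tangents
give `cos φ sin θ f_t = u_x cos ψ + u_y sin ψ` and `sin φ f_t = u_x sin ψ - u_y cos ψ`. These are
the commanded horizontal forces rotated by the yaw `ψ`, and the thrust map applies the inverse
rotation, which returns `(u_x, u_y)`. The vertical equation is `cos φ cos θ f_t = u_z + g`;
everything is well defined because `cos ∘ arctan > 0`.
-/

open Real

theorem mul_cos_add_mul_sin_yaw (x y ψ : ℝ) :
    (x * cos ψ + y * sin ψ) * cos ψ + (x * sin ψ - y * cos ψ) * sin ψ = x := by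
  linear_combination x * sin_sq_add_cos_sq ψ

theorem mul_sin_sub_mul_cos_yaw (x y ψ : ℝ) :
    (x * cos ψ + y * sin ψ) * sin ψ - (x * sin ψ - y * cos ψ) * cos ψ = y := by
  linear_combination y * sin_sq_add_cos_sq ψ

theorem cos_mul_sin_mul_div_cos_mul_cos {φ : ℝ} (θ c : ℝ) (hφ : cos φ ≠ 0) :
    cos φ * sin θ * (c / (cos φ * cos θ)) = tan θ * c := by
  rw [tan_eq_sin_div_cos]
  field_simp

theorem sin_mul_div_cos_mul_cos (φ θ c : ℝ) :
    sin φ * (c / (cos φ * cos θ)) = tan φ * c / cos θ := by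
  rw [tan_eq_sin_div_cos]
  ring

/-- Converter consistency: the converter block's formulas for the desired pitch
angle `θ`, desired roll angle `φ` and total thrust `f_t` exactly invert the
quadrotor translational force equations. -/
theorem converter_consistency (ux uy uz ψ g : ℝ) (h : 0 < uz + g) :
    let θ := Real.arctan ((ux * Real.cos ψ + uy * Real.sin ψ) / (uz + g))
    let φ := Real.arctan (Real.cos θ * (ux * Real.sin ψ - uy * Real.cos ψ) / (uz + g))
    let ft := (uz + g) / (Real.cos φ * Real.cos θ)
    (Real.cos φ * Real.sin θ * Real.cos ψ + Real.sin φ * Real.sin ψ) * ft = ux ∧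
    (Real.cos φ * Real.sin θ * Real.sin ψ - Real.sin φ * Real.cos ψ) * ft = uy ∧
    Real.cos φ * Real.cos θ * ft - g = uz := by
  intro θ φ ft
  have hz : uz + g ≠ 0 := h.ne'
  have hcθ : cos θ ≠ 0 := (cos_arctan_pos _).ne'
  have hcφ : cos φ ≠ 0 := (cos_arctan_pos _).ne'
  have hpitch : cos φ * sin θ * ft = ux * cos ψ + uy * sin ψ := by
    rw [cos_mul_sin_mul_div_cos_mul_cos θ _ hcφ, tan_arctan, div_mul_cancel₀ _ hz]
  have hroll : sin φ * ft = ux * sin ψ - uy * cos ψ := by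
    rw [sin_mul_div_cos_mul_cos, tan_arctan, div_mul_cancel₀ _ hz, mul_div_cancel_left₀ _ hcθ]
  refine ⟨?_, ?_, ?_⟩
  · rw [← mul_cos_add_mul_sin_yaw ux uy ψ, ← hpitch, ← hroll]
    ring
  · rw [← mul_sin_sub_mul_cos_yaw ux uy ψ, ← hpitch, ← hroll]
    ring
  · rw [mul_div_cancel₀ _ (mul_ne_zero hcφ hcθ)]
    ring
end
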